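/- Under the hypotheses of the previous result (rigid biinfinite sequence 𝒢 with (F_n) stabilizing at F_n, and G_0 finitely generated residually finite), the natural map from the inverse limit of 𝒢 to G_0 is injective and gives an isomorphism of the inverse limit onto its image F_n, and the natural map F_n → direct limit of 𝒢 is an isomorphism; in particular, the inverse limit and the direct limit of 𝒢 are both isomorphic to F_n, hence to a subgroup (and to a quotient) of G_0. -/

import Mathlib

variable {G : ℤ → Type*} [∀ n, Group (G n)]

/-- Transport a group along an equality of indices. -/
def castHom {G : ℤ → Type*} [∀ n, Group (G n)] {a b : ℤ} (h : a = b) : G a →* G b := by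
  subst h; exact MonoidHom.id _

/-- The composite bonding homomorphism `G (n + m) →* G n` of the inverse
sequence with bonding maps `φ k : G (k+1) →* G k`. -/
def chain (φ : ∀ n : ℤ, G (n + 1) →* G n) (n : ℤ) : (m : ℕ) → G (n + m) →* G n
  | 0 => castHom (by simp)
  | (m + 1) => (chain φ n m).comp ((φ (n + m)).comp (castHom (by push_cast; ring)))

/-- `F n` is the image of `G n` in `G 0` under the composite bonding map. -/
def F (φ : ∀ n : ℤ, G (n + 1) →* G n) (n : ℕ) : Subgroup (G 0) :=
  (chain φ 0 n).range

/-- Rigidity of a biinfinite inverse sequence of groups: for every `m ≥ 1` and every `n ∈ ℤ`,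
the segment `G 0 ← G 1 ← ⋯ ← G m` is isomorphic, via vertical isomorphisms commuting with the
bonding maps, to the segment `G n ← G (n+1) ← ⋯ ← G (n+m)`. -/
def Rigid (φ : ∀ n : ℤ, G (n + 1) →* G n) : Prop :=
  ∀ m : ℕ, 1 ≤ m → ∀ n : ℤ,
    ∃ ψ : ∀ k : ℕ, k ≤ m → (G (k : ℤ) ≃* G (n + (k : ℤ))),
      ∀ (k : ℕ) (hk : k + 1 ≤ m) (x : G ((k : ℤ) + 1)),
        ψ k (Nat.le_of_succ_le hk) (φ (k : ℤ) x) =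
          φ (n + (k : ℤ))
            (castHom (by push_cast; ring)
              (ψ (k + 1) hk (castHom (by push_cast; ring) x)))

/-- A group is residually finite if every nontrivial element admits a homomorphism to some
finite group under which it stays nontrivial. -/
def ResiduallyFinite (H : Type*) [Group H] : Prop :=
  ∀ g : H, g ≠ 1 → ∃ (K : Type) (_ : Group K) (_ : Finite K) (φ : H →* K), φ g ≠ 1

/-- The inverse limit of the biinfinite sequence, as a subgroup of the product. -/
def invLim (φ : ∀ n : ℤ, G (n + 1) →* G n) : Subgroup (∀ n, G n) where
  carrier := {s | ∀ n : ℤ, φ n (s (n + 1)) = s n}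
  mul_mem' := by intro a b ha hb n; simp [ha n, hb n]
  one_mem' := by intro n; simp
  inv_mem' := by intro a ha n; simp [ha n]

/-- The natural map from the inverse limit to `G 0`. -/
def projZero (φ : ∀ n : ℤ, G (n + 1) →* G n) : invLim φ →* G 0 :=
  (Pi.evalMonoidHom G 0).comp (invLim φ).subtype

/-- The natural map `G 0 →* G (-m)` of the sequence (towards the direct limit). -/
def down (φ : ∀ n : ℤ, G (n + 1) →* G n) (m : ℕ) : G 0 →* G (-(m : ℤ)) :=
  (chain φ (-(m : ℤ)) m).comp (castHom (by simp))

/-- The transition map `G (-m) →* G (-m')` for `m ≤ m'`. -/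
def transDown (φ : ∀ n : ℤ, G (n + 1) →* G n) (m m' : ℕ) (h : m ≤ m') :
    G (-(m : ℤ)) →* G (-(m' : ℤ)) :=
  (chain φ (-(m' : ℤ)) (m' - m)).comp (castHom (by omega))

section casts
variable {a b c : ℤ}
@[simp] lemma castHom_id (h : a = a) (x : G a) : castHom h x = x := rfl
lemma castHom_castHom (h₁ : a = b) (h₂ : b = c) (x : G a) :
    castHom h₂ (castHom h₁ x) = castHom (h₁.trans h₂) x := by subst h₁; subst h₂; rfl
lemma castHom_inj (h : a = b) {x y : G a} (hxy : castHom h x = castHom h y) : x = y := by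
  subst h; exact hxy
lemma castHom_eq_one (h : a = b) {x : G a} : castHom h x = 1 ↔ x = 1 := by
  subst h; exact Iff.rfl
lemma castHom_surj (h : a = b) (y : G b) : ∃ x : G a, castHom h x = y := by
  subst h; exact ⟨y, rfl⟩
lemma cast_section (s : ∀ n, G n) (h : a = b) : castHom h (s a) = s b := by subst h; rfl
variable (φ : ∀ n : ℤ, G (n + 1) →* G n)
lemma phi_cast (h : a = b) (x : G (a + 1)) :
    φ b (castHom (by rw [h]) x) = castHom h (φ a x) := by subst h; rfl
lemma phi_cast' (h : a = b) (h' : a + 1 = b + 1) (x : G (a + 1)) :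
    castHom h (φ a x) = φ b (castHom h' x) := by subst h; rfl
lemma chain_cast (h : a = b) (m : ℕ) (x : G (a + m)) :
    chain φ b m (castHom (by rw [h]) x) = castHom h (chain φ a m x) := by subst h; rfl
lemma chain_natCast {m m' : ℕ} (hm : m = m') (x : G (a + m)) :
    chain φ a m' (castHom (by rw [hm]) x) = chain φ a m x := by subst hm; rfl
lemma chain_zero (x : G (a + (0:ℕ))) : chain φ a 0 x = castHom (by simp) x := rfl
lemma chain_succ (m : ℕ) (x : G (a + ((m+1 : ℕ) : ℤ))) :
    chain φ a (m+1) x = chain φ a m (φ (a + m) (castHom (by push_cast; ring) x)) := rfl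

lemma chain_comp (c k : ℕ) (x : G (a + ((c + k : ℕ) : ℤ))) :
    chain φ a (c + k) x =
      chain φ a c (chain φ (a + c) k (castHom (by push_cast; ring) x)) := by
  induction k with
  | zero =>
    show chain φ a c x = _
    rw [chain_zero, castHom_castHom]
    rfl
  | succ k ih =>
    show chain φ a (c+k) _ = _
    rw [ih]
    refine congrArg _ (congrArg _ ?_)
    simp only [MonoidHom.comp_apply, Nat.add_eq]
    rw [castHom_castHom,
      phi_cast' φ (show a + ((c + k : ℕ) : ℤ) = a + c + k by push_cast; ring)
        (by push_cast; ring), castHom_castHom]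

lemma chain_succ_left (m : ℕ) (x : G (a + ((m+1:ℕ):ℤ))) :
    chain φ a (m+1) x = φ a (chain φ (a+1) m (castHom (by push_cast; ring) x)) := by
  induction m with
  | zero =>
    rw [chain_succ, chain_zero, chain_zero, castHom_castHom,
      phi_cast' φ (show a + ((0:ℕ):ℤ) = a by simp) (by push_cast; ring), castHom_castHom]
  | succ m ih =>
    rw [chain_succ, ih, chain_succ]
    refine congrArg _ (congrArg _ ?_)
    rw [castHom_castHom,
      phi_cast' φ (show a + ((m+1:ℕ):ℤ) = a + 1 + m by push_cast; ring)
        (by push_cast; ring), castHom_castHom]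
end casts

section hgrp
variable {a b : ℤ} (φ : ∀ n : ℤ, G (n + 1) →* G n)

def Hgrp (b : ℤ) (L : ℕ) : Subgroup (G b) := (chain φ b L).range

lemma cast_mem_Hgrp (h : a = b) {L : ℕ} {x : G a} (hx : x ∈ Hgrp φ a L) :
    castHom h x ∈ Hgrp φ b L := by subst h; exact hx

lemma hgrp_natCast {k k' : ℕ} (h : k = k') : Hgrp φ a k = Hgrp φ a k' := by subst h; rfl

lemma hgrp_split (c k : ℕ) : Hgrp φ a (c + k) = (Hgrp φ (a + c) k).map (chain φ a c) := by
  ext x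
  simp only [Hgrp, Subgroup.mem_map, MonoidHom.mem_range]
  constructor
  · rintro ⟨v, rfl⟩
    exact ⟨chain φ (a + c) k (castHom (by push_cast; ring) v), ⟨_, rfl⟩,
      (chain_comp φ c k v).symm⟩
  · rintro ⟨w, ⟨u, rfl⟩, rfl⟩
    obtain ⟨v, rfl⟩ := castHom_surj (show a + ((c+k:ℕ):ℤ) = a + c + k by push_cast; ring) u
    exact ⟨v, chain_comp φ c k v⟩

lemma psi_chain (bb : ℤ) (M : ℕ)
    (ψ : ∀ k : ℕ, k ≤ M → (G (k : ℤ) ≃* G (bb + (k : ℤ))))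
    (hψ : ∀ (k : ℕ) (hk : k + 1 ≤ M) (x : G ((k : ℤ) + 1)),
      ψ k (Nat.le_of_succ_le hk) (φ (k : ℤ) x) =
        φ (bb + (k : ℤ))
          (castHom (by push_cast; ring) (ψ (k + 1) hk (castHom (by push_cast; ring) x)))) :
    ∀ (L j : ℕ) (h : j + L ≤ M) (hj : j ≤ M) (z : G ((j:ℤ) + (L:ℤ))),
      ψ j hj (chain φ j L z) =
        chain φ (bb + j) L
          (castHom (by push_cast; ring) (ψ (j + L) h (castHom (by push_cast; ring) z))) := by
  intro L
  induction L with
  | zero => intro j h hj z; rw [chain_zero, chain_zero, castHom_castHom]; rfl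
  | succ L ih =>
    intro j h hj z
    rw [chain_succ]
    have hw : castHom (show ((j:ℤ) + (L:ℤ)) = ((j + L : ℕ) : ℤ) by push_cast; ring)
        (φ ((j:ℤ) + (L:ℤ)) (castHom (by push_cast; ring) z)) =
        φ ((j + L : ℕ) : ℤ) (castHom (by push_cast; ring) z) := by
      rw [phi_cast' φ (show ((j:ℤ) + (L:ℤ)) = ((j + L : ℕ) : ℤ) by push_cast; ring)
        (by push_cast; ring), castHom_castHom]
    rw [ih j (by omega) hj, hw, hψ (j + L) h,
      chain_succ φ L (castHom (by push_cast; ring) (ψ (j + (L+1)) h (castHom (by push_cast; ring) z))),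
      castHom_castHom,
      phi_cast' φ (show bb + ((j + L : ℕ) : ℤ) = bb + (j:ℤ) + (L:ℤ) by push_cast; ring)
        (by push_cast; ring),
      castHom_castHom, castHom_castHom]
    rfl
end hgrp

section stab
variable {a b : ℤ} (φ : ∀ n : ℤ, G (n + 1) →* G n)

lemma hgrp_mapcast (h : a = b) (L : ℕ) : (Hgrp φ a L).map (castHom h) = Hgrp φ b L := by
  subst h; exact Subgroup.map_id _

lemma psi_hgrp (bb : ℤ) (M : ℕ)
    (ψ : ∀ k : ℕ, k ≤ M → (G (k : ℤ) ≃* G (bb + (k : ℤ))))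
    (hψ : ∀ (k : ℕ) (hk : k + 1 ≤ M) (x : G ((k : ℤ) + 1)),
      ψ k (Nat.le_of_succ_le hk) (φ (k : ℤ) x) =
        φ (bb + (k : ℤ))
          (castHom (by push_cast; ring) (ψ (k + 1) hk (castHom (by push_cast; ring) x))))
    (L j : ℕ) (h : j + L ≤ M) (hj : j ≤ M) :
    (Hgrp φ (j:ℤ) L).map (ψ j hj).toMonoidHom = Hgrp φ (bb + (j:ℤ)) L := by
  have key := psi_chain φ bb M ψ hψ
  ext x
  simp only [Hgrp, Subgroup.mem_map, MonoidHom.mem_range, MulEquiv.coe_toMonoidHom]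
  constructor
  · rintro ⟨y, ⟨z, rfl⟩, rfl⟩
    exact ⟨castHom (by push_cast; ring) (ψ (j + L) h (castHom (by push_cast; ring) z)),
      (key L j h hj z).symm⟩
  · rintro ⟨v, rfl⟩
    obtain ⟨w, hw⟩ := castHom_surj (show ((j:ℤ) + (L:ℤ)) = ((j+L:ℕ):ℤ) by push_cast; ring)
      ((ψ (j + L) h).symm
        (castHom (show bb + (j:ℤ) + (L:ℤ) = bb + ((j+L:ℕ):ℤ) by push_cast; ring) v))
    refine ⟨chain φ (j:ℤ) L w, ⟨w, rfl⟩, ?_⟩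
    rw [key L j h hj w, hw, MulEquiv.apply_symm_apply, castHom_castHom, castHom_id]

lemma hgrp_stab (hrigid : Rigid φ) (n : ℕ) (hstab : Hgrp φ 0 n = Hgrp φ 0 (n+1)) (b : ℤ) :
    Hgrp φ b (n+1) = Hgrp φ b n := by
  obtain ⟨ψ, hψ⟩ := hrigid (n+1) (by omega) b
  have h1 := psi_hgrp φ b (n+1) ψ hψ (n+1) 0 (by omega) (by omega)
  have h2 := psi_hgrp φ b (n+1) ψ hψ n 0 (by omega) (by omega)
  have e : b + ((0:ℕ):ℤ) = b := by push_cast; ring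
  have hstab' : Hgrp φ ((0:ℕ):ℤ) (n+1) = Hgrp φ ((0:ℕ):ℤ) n := hstab.symm
  have h3 : Hgrp φ (b + ((0:ℕ):ℤ)) (n+1) = Hgrp φ (b + ((0:ℕ):ℤ)) n := by
    rw [← h1, hstab']; exact h2
  calc Hgrp φ b (n+1)
      = (Hgrp φ (b + ((0:ℕ):ℤ)) (n+1)).map (castHom e) := (hgrp_mapcast φ e (n+1)).symm
    _ = (Hgrp φ (b + ((0:ℕ):ℤ)) n).map (castHom e) := by rw [h3]
    _ = Hgrp φ b n := hgrp_mapcast φ e n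
end stab

section more
variable {a b : ℤ} (φ : ∀ n : ℤ, G (n + 1) →* G n)

lemma hgrp_ge (hrigid : Rigid φ) (n : ℕ) (hstab : Hgrp φ 0 n = Hgrp φ 0 (n+1)) :
    ∀ (k : ℕ) (b : ℤ), n ≤ k → Hgrp φ b k = Hgrp φ b n := by
  intro k
  induction k with
  | zero =>
    intro b h
    obtain rfl : n = 0 := by omega
    rfl
  | succ k ih =>
    intro b h
    rcases Nat.eq_or_lt_of_le h with heq | hlt
    · subst heq; rfl
    · have hnk : n ≤ k := by omega
      have e1 : (k - n) + (n+1) = k+1 := by omega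
      have e2 : (k - n) + n = k := by omega
      calc Hgrp φ b (k+1) = Hgrp φ b ((k-n) + (n+1)) := (hgrp_natCast φ e1).symm
        _ = (Hgrp φ (b + ((k-n:ℕ):ℤ)) (n+1)).map (chain φ b (k-n)) := hgrp_split φ _ _
        _ = (Hgrp φ (b + ((k-n:ℕ):ℤ)) n).map (chain φ b (k-n)) := by
              rw [hgrp_stab φ hrigid n hstab]
        _ = Hgrp φ b ((k-n) + n) := (hgrp_split φ _ _).symm
        _ = Hgrp φ b k := hgrp_natCast φ e2
        _ = Hgrp φ b n := ih b hnk

lemma hgrp_surj (hrigid : Rigid φ) (n : ℕ) (hstab : Hgrp φ 0 n = Hgrp φ 0 (n+1))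
    (b : ℤ) (x : G b) (hx : x ∈ Hgrp φ b n) :
    ∃ y : G (b+1), y ∈ Hgrp φ (b+1) n ∧ φ b y = x := by
  rw [← hgrp_stab φ hrigid n hstab b] at hx
  obtain ⟨v, rfl⟩ := hx
  exact ⟨chain φ (b+1) n (castHom (by push_cast; ring) v), ⟨_, rfl⟩,
    (chain_succ_left φ n v).symm⟩

lemma invLim_chain {s : ∀ p, G p} (hs : s ∈ invLim φ) (a : ℤ) (k : ℕ) :
    chain φ a k (s (a + k)) = s a := by
  have hs' : ∀ p : ℤ, φ p (s (p+1)) = s p := hs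
  induction k with
  | zero => rw [chain_zero]; exact cast_section s _
  | succ k ih =>
    rw [chain_succ, cast_section s (show a + ((k+1:ℕ):ℤ) = a + (k:ℤ) + 1 by push_cast; ring),
      hs' (a + (k:ℤ)), ih]
end more

section hopf
variable (φ : ∀ n : ℤ, G (n + 1) →* G n)

lemma key0 (hrigid : Rigid φ) (n : ℕ) (hstab : Hgrp φ 0 n = Hgrp φ 0 (n+1))
    (hfg : Group.FG (G 0))
    (hrf : ∀ g : G 0, g ≠ 1 →
      ∃ (K : Type) (_ : Group K) (_ : Finite K) (π : G 0 →* K), π g ≠ 1) :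
    ∀ (m : ℕ) (x : G ((0:ℤ) + (m:ℤ))),
      castHom (by omega) x ∈ Hgrp φ (m:ℤ) n → chain φ 0 m x = 1 → x = 1 := by
  intro m x hx h1
  rcases Nat.eq_zero_or_pos m with hm | hm
  · subst hm
    rw [chain_zero] at h1
    exact (castHom_eq_one _).mp h1
  obtain ⟨ψ, hψ⟩ := hrigid (m + n) (by omega) (m:ℤ)
  have h0 : (0:ℕ) ≤ m + n := Nat.zero_le _
  have pfE : (m:ℤ) + ((0:ℕ):ℤ) = (0:ℤ) + (m:ℤ) := by push_cast; ring
  set E : G 0 →* G 0 :=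
    ((chain φ 0 m).comp (castHom pfE)).comp (ψ 0 h0).toMonoidHom with hE
  have hmapE : (Hgrp φ 0 n).map E = Hgrp φ 0 n := by
    calc (Hgrp φ 0 n).map E
        = ((Hgrp φ ((0:ℕ):ℤ) n).map (ψ 0 h0).toMonoidHom).map
            ((chain φ 0 m).comp (castHom pfE)) := (Subgroup.map_map _ _ _).symm
      _ = (Hgrp φ ((m:ℤ) + ((0:ℕ):ℤ)) n).map ((chain φ 0 m).comp (castHom pfE)) := by
          rw [psi_hgrp φ (m:ℤ) (m+n) ψ hψ n 0 (by omega) h0]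
      _ = ((Hgrp φ ((m:ℤ) + ((0:ℕ):ℤ)) n).map (castHom pfE)).map (chain φ 0 m) :=
          (Subgroup.map_map _ _ _).symm
      _ = (Hgrp φ ((0:ℤ) + (m:ℤ)) n).map (chain φ 0 m) := by rw [hgrp_mapcast φ pfE n]
      _ = Hgrp φ 0 (m + n) := (hgrp_split φ m n).symm
      _ = Hgrp φ 0 n := hgrp_ge φ hrigid n hstab (m+n) 0 (by omega)
  have hsurjE : ∀ j : ℕ, ∀ y ∈ Hgrp φ 0 n, ∃ z ∈ Hgrp φ 0 n, E^[j] z = y := by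
    intro j
    induction j with
    | zero => exact fun y hy => ⟨y, hy, rfl⟩
    | succ j ih =>
      intro y hy
      obtain ⟨w, hw, hw2⟩ := ih y hy
      obtain ⟨z, hz, hz2⟩ := Subgroup.mem_map.mp (hmapE.symm ▸ hw)
      exact ⟨z, hz, by rw [Function.iterate_succ_apply, hz2, hw2]⟩
  have hiterhom : ∀ j : ℕ, ∃ f : G 0 →* G 0, ∀ z, f z = E^[j] z := by
    intro j
    induction j with
    | zero => exact ⟨MonoidHom.id _, fun z => rfl⟩
    | succ j ih =>
      obtain ⟨f, hf⟩ := ih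
      exact ⟨f.comp E, fun z => by
        rw [MonoidHom.comp_apply, hf, ← Function.iterate_succ_apply]⟩
  have hinj : ∀ y ∈ Hgrp φ 0 n, E y = 1 → y = 1 := by
    intro y hy hEy
    by_contra hy1
    obtain ⟨K, _, _, π, hπ⟩ := hrf y hy1
    obtain ⟨S, hS⟩ := hfg.out
    have main : ∀ c d : ℕ, c < d →
        (fun s : S => π (E^[c] (s : G 0))) = (fun s : S => π (E^[d] (s : G 0))) → False := by
      intro c d hlt hfe
      obtain ⟨fc, hfc⟩ := hiterhom c
      obtain ⟨fd, hfd⟩ := hiterhom d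
      have hhom : π.comp fc = π.comp fd := by
        apply MonoidHom.eq_of_eqOn_dense hS
        intro g hg
        have := congrFun hfe ⟨g, hg⟩
        simpa [hfc, hfd] using this
      obtain ⟨z, hz, hz2⟩ := hsurjE c y hy
      have e1 : π (E^[c] z) = π (E^[d] z) := by
        have := DFunLike.congr_fun hhom z
        simpa [hfc, hfd] using this
      have h2 : E^[d] z = 1 := by
        have e2 : E^[d - c - 1] (E (E^[c] z)) = E^[d] z := by
          rw [← Function.iterate_succ_apply' E c z,
            ← Function.iterate_add_apply E (d-c-1) (c+1) z]
          congr 1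
          omega
        obtain ⟨fe, hfe'⟩ := hiterhom (d - c - 1)
        rw [← e2, hz2, hEy, ← hfe', map_one]
      rw [hz2] at e1
      rw [h2, map_one] at e1
      exact hπ e1
    obtain ⟨c, d, hcd, hfcd⟩ :=
      Finite.exists_ne_map_eq_of_infinite (fun (j : ℕ) (s : S) => π (E^[j] (s : G 0)))
    rcases Nat.lt_or_ge c d with h | h
    · exact main c d h hfcd
    · exact main d c (by omega) hfcd.symm
  -- conclude
  have hyx : ψ 0 h0 ((ψ 0 h0).symm (castHom pfE.symm x)) = castHom pfE.symm x :=
    MulEquiv.apply_symm_apply _ _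
  set y := (ψ 0 h0).symm (castHom pfE.symm x) with hy
  have hEy : E y = 1 := by
    show chain φ 0 m (castHom pfE (ψ 0 h0 y)) = 1
    rw [hyx, castHom_castHom, castHom_id]
    exact h1
  have hymem : y ∈ Hgrp φ 0 n := by
    have hx' : castHom pfE.symm x ∈ Hgrp φ ((m:ℤ) + ((0:ℕ):ℤ)) n := by
      have h5 := cast_mem_Hgrp φ (show (m:ℤ) = (m:ℤ) + ((0:ℕ):ℤ) by push_cast; ring) hx
      rw [castHom_castHom] at h5
      exact h5
    rw [← psi_hgrp φ (m:ℤ) (m+n) ψ hψ n 0 (by omega) h0] at hx'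
    obtain ⟨w, hw, hw2⟩ := Subgroup.mem_map.mp hx'
    have hwy : w = y := by
      have := congrArg (ψ 0 h0).symm hw2
      simp only [MulEquiv.coe_toMonoidHom, MulEquiv.symm_apply_apply] at this
      exact this
    rwa [← hwy]
  have hy1 : y = 1 := hinj y hymem hEy
  have : castHom pfE.symm x = 1 := by rw [← hyx, hy1, map_one]
  exact (castHom_eq_one _).mp this
end hopf

section keyb
variable (φ : ∀ n : ℤ, G (n + 1) →* G n)

lemma keyb (hrigid : Rigid φ) (n : ℕ) (hstab : Hgrp φ 0 n = Hgrp φ 0 (n+1))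
    (hfg : Group.FG (G 0))
    (hrf : ∀ g : G 0, g ≠ 1 →
      ∃ (K : Type) (_ : Group K) (_ : Finite K) (π : G 0 →* K), π g ≠ 1)
    (b : ℤ) (m : ℕ) (x : G (b + (m:ℤ)))
    (hx : x ∈ Hgrp φ (b + (m:ℤ)) n) (h1 : chain φ b m x = 1) : x = 1 := by
  rcases Nat.eq_zero_or_pos m with hm | hm
  · subst hm
    rw [chain_zero] at h1
    exact (castHom_eq_one _).mp h1
  obtain ⟨ψ, hψ⟩ := hrigid (m + n) (by omega) b
  have key := psi_chain φ b (m+n) ψ hψ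
  have hm' : m ≤ m + n := by omega
  set z := (ψ m hm').symm x with hz
  have hzx : ψ m hm' z = x := MulEquiv.apply_symm_apply _ _
  have hzmem : z ∈ Hgrp φ (m:ℤ) n := by
    rw [← psi_hgrp φ b (m+n) ψ hψ n m (le_refl _) hm'] at hx
    obtain ⟨w, hw, hw2⟩ := Subgroup.mem_map.mp hx
    have hwz : w = z := by
      have := congrArg (ψ m hm').symm hw2
      simp only [MulEquiv.coe_toMonoidHom, MulEquiv.symm_apply_apply] at this
      rw [this, hz]
    rwa [← hwz]
  have hc : ∀ (j j' : ℕ) (e : j = j') (hj : j ≤ m+n) (hj' : j' ≤ m+n) (zz : G (j:ℤ)),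
      ψ j' hj' (castHom (by rw [e]) zz) = castHom (by rw [e]) (ψ j hj zz) := by
    rintro j j' rfl hj hj' zz; rfl
  obtain ⟨w, hw⟩ := castHom_surj
    (show ((0:ℕ):ℤ) + (m:ℤ) = ((0+m:ℕ):ℤ) by push_cast; ring)
    (castHom (show (m:ℤ) = ((0+m:ℕ):ℤ) by push_cast; ring) z)
  have h0m : 0 + m ≤ m + n := by omega
  have hkey := key m 0 h0m (Nat.zero_le _) w
  have h6 : ψ (0+m) h0m (castHom (show ((0:ℕ):ℤ) + (m:ℤ) = ((0+m:ℕ):ℤ) by push_cast; ring) w)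
      = castHom (show b + (m:ℤ) = b + ((0+m:ℕ):ℤ) by push_cast; ring) x := by
    rw [hw]
    have h62 := hc m (0+m) (by omega) hm' h0m z
    rw [h62, hzx]
  have c0 : b = b + ((0:ℕ):ℤ) := by push_cast; ring
  have h10 : chain φ (b + ((0:ℕ):ℤ)) m
        (castHom (show b + (m:ℤ) = b + ((0:ℕ):ℤ) + (m:ℤ) by push_cast; ring) x)
      = castHom c0 (chain φ b m x) := chain_cast φ c0 m x
  have hfinal : ψ 0 (Nat.zero_le _) (chain φ ((0:ℕ):ℤ) m w) = 1 := by
    rw [hkey, h6, castHom_castHom, h10, h1, map_one]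
  have hcond : chain φ ((0:ℕ):ℤ) m w = 1 := (MulEquiv.map_eq_one_iff _).mp hfinal
  have h7 : castHom (show ((0:ℕ):ℤ) + (m:ℤ) = (m:ℤ) by push_cast; ring) w
      ∈ Hgrp φ (m:ℤ) n := by
    have h8 := congrArg (castHom (G := G) (show ((0+m:ℕ):ℤ) = (m:ℤ) by push_cast; ring)) hw
    rw [castHom_castHom, castHom_castHom, castHom_id] at h8
    rw [h8]
    exact hzmem
  have hw1 : w = 1 := key0 φ hrigid n hstab hfg hrf m w h7 hcond
  have h11 : castHom (show (m:ℤ) = ((0+m:ℕ):ℤ) by push_cast; ring) z = 1 := by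
    rw [← hw, hw1, map_one]
  have hz1 : z = 1 := (castHom_eq_one _).mp h11
  rw [← hzx, hz1, map_one]
end keyb

section lift
variable (φ : ∀ n : ℤ, G (n + 1) →* G n)

noncomputable def liftSeq (n : ℕ)
    (hsur : ∀ (b : ℤ) (x : G b), x ∈ Hgrp φ b n →
      ∃ y : G (b+1), y ∈ Hgrp φ (b+1) n ∧ φ b y = x)
    (g : G 0) (hg : g ∈ Hgrp φ 0 n) : ∀ k : ℕ, {x : G (k:ℤ) // x ∈ Hgrp φ (k:ℤ) n}
  | 0 => ⟨g, hg⟩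
  | (k+1) =>
      ⟨castHom (by push_cast; ring)
          (hsur (k:ℤ) (liftSeq n hsur g hg k).1 (liftSeq n hsur g hg k).2).choose,
        cast_mem_Hgrp φ (by push_cast; ring)
          (hsur (k:ℤ) (liftSeq n hsur g hg k).1 (liftSeq n hsur g hg k).2).choose_spec.1⟩

lemma liftSeq_succ (n : ℕ)
    (hsur : ∀ (b : ℤ) (x : G b), x ∈ Hgrp φ b n →
      ∃ y : G (b+1), y ∈ Hgrp φ (b+1) n ∧ φ b y = x)
    (g : G 0) (hg : g ∈ Hgrp φ 0 n) (k : ℕ) :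
    φ (k:ℤ) (castHom (show ((k+1:ℕ):ℤ) = (k:ℤ)+1 by push_cast; ring)
      (liftSeq φ n hsur g hg (k+1)).1) = (liftSeq φ n hsur g hg k).1 := by
  show φ (k:ℤ) (castHom _ (castHom _
      (hsur (k:ℤ) (liftSeq φ n hsur g hg k).1 (liftSeq φ n hsur g hg k).2).choose)) = _
  rw [castHom_castHom, castHom_id]
  exact (hsur (k:ℤ) (liftSeq φ n hsur g hg k).1 (liftSeq φ n hsur g hg k).2).choose_spec.2

lemma down_compat (p : ℤ) (k k' : ℕ) (hk : k = k' + 1) (e : (0:ℤ) = (p+1) + (k':ℤ))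
    (e' : (0:ℤ) = p + (k:ℤ)) (g : G 0) :
    φ p (chain φ (p+1) k' (castHom e g)) = chain φ p k (castHom e' g) := by
  subst hk
  rw [chain_succ_left φ k' (castHom e' g), castHom_castHom]

end lift

/-- Under rigidity, stabilization and `G 0` finitely generated residually finite, both the
inverse limit and the direct limit of the biinfinite sequence are isomorphic to `F n`:
the projection of the inverse limit to `G 0` is injective with image `F n`, and the canonical
map from `F n` to the direct limit is bijective. -/
theorem limits_isomorphic_to_stable_image (φ : ∀ n : ℤ, G (n + 1) →* G n)
    (hrigid : Rigid φ) (n : ℕ) (hstab : F φ n = F φ (n + 1))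
    (hfg : Group.FG (G 0)) (hrf : ResiduallyFinite (G 0)) :
    Function.Injective (projZero φ) ∧ (projZero φ).range = F φ n ∧
      (∀ x ∈ F φ n, ∀ y ∈ F φ n, (∃ m : ℕ, down φ m x = down φ m y) → x = y) ∧
      (∀ (m : ℕ) (x : G (-(m : ℤ))), ∃ (m' : ℕ) (h : m ≤ m') (y : G 0),
        y ∈ F φ n ∧ transDown φ m m' h x = down φ m' y) := by
  have hstab' : Hgrp φ 0 n = Hgrp φ 0 (n+1) := hstab
  have hrf' : ∀ g : G 0, g ≠ 1 →
      ∃ (K : Type) (_ : Group K) (_ : Finite K) (π : G 0 →* K), π g ≠ 1 := hrf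
  refine ⟨?_, ?_, ?_, ?_⟩
  · -- injectivity of projZero
    refine (injective_iff_map_eq_one _).mpr ?_
    rintro ⟨s, hs⟩ h1
    have hs0 : s 0 = 1 := h1
    refine Subtype.ext (funext fun p => ?_)
    have hone : ((1 : invLim φ) : ∀ q, G q) p = 1 := rfl
    rw [hone]
    rcases le_or_gt 0 p with hp | hp
    · set k := p.toNat with hk
      have hpk : p = ((k:ℕ):ℤ) := by omega
      have e1 : p = (0:ℤ) + (k:ℤ) := by omega
      have hmem : castHom (show (0:ℤ) + (k:ℤ) = (k:ℤ) by omega)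
          (castHom e1 (s p)) ∈ Hgrp φ (k:ℤ) n := by
        rw [castHom_castHom, cast_section s]
        exact ⟨s ((k:ℤ) + (n:ℤ)), invLim_chain φ hs (k:ℤ) n⟩
      have hch : chain φ 0 k (castHom e1 (s p)) = 1 := by
        rw [cast_section s e1, invLim_chain φ hs 0 k, hs0]
      have hx1 := key0 φ hrigid n hstab' hfg hrf' k (castHom e1 (s p)) hmem hch
      exact (castHom_eq_one e1).mp hx1
    · set k := (-p).toNat with hk
      have e1 : (0:ℤ) = p + (k:ℤ) := by omega
      have h4 : s (p + (k:ℤ)) = 1 := by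
        rw [← cast_section s e1, hs0, map_one]
      have h5 := invLim_chain φ hs p k
      rw [h4, map_one] at h5
      exact h5.symm
  · -- range = F n
    ext g
    simp only [MonoidHom.mem_range]
    constructor
    · rintro ⟨⟨s, hs⟩, rfl⟩
      exact ⟨s ((0:ℤ) + (n:ℤ)), invLim_chain φ hs 0 n⟩
    · intro hg
      have hsur := fun b x hx => hgrp_surj φ hrigid n hstab' b x hx
      set T := liftSeq φ n hsur g hg with hT
      have Tcongr : ∀ (j j' : ℕ) (e : j = j'),
          castHom (show ((j:ℕ):ℤ) = ((j':ℕ):ℤ) by rw [e]) (T j).1 = (T j').1 := by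
        rintro j j' rfl; rfl
      set s : ∀ p : ℤ, G p := fun p =>
        if h : 0 ≤ p then castHom (show ((p.toNat:ℕ):ℤ) = p by omega) (T p.toNat).1
        else chain φ p (-p).toNat
          (castHom (show (0:ℤ) = p + (((-p).toNat:ℕ):ℤ) by omega) g) with hsdef
      have hsmem : s ∈ invLim φ := by
        intro p
        show φ p (s (p+1)) = s p
        simp only [hsdef]
        rcases le_or_gt 0 p with hp | hp
        · have hp1 : (0:ℤ) ≤ p + 1 := by omega
          rw [dif_pos hp1, dif_pos hp]
          have hstep := liftSeq_succ φ n hsur g hg p.toNat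
          have h20 := congrArg
            (castHom (G:=G) (show ((p.toNat:ℕ):ℤ) = p by omega)) hstep
          rw [phi_cast' φ (show ((p.toNat:ℕ):ℤ) = p by omega) (by omega),
            castHom_castHom] at h20
          rw [← Tcongr (p.toNat+1) ((p+1).toNat) (by omega), castHom_castHom]
          exact h20
        · rcases eq_or_lt_of_le (show p + 1 ≤ 0 by omega) with hp1 | hp1
          · obtain rfl : p = -1 := by omega
            rw [dif_pos (show (0:ℤ) ≤ -1 + 1 by norm_num),
              dif_neg (show ¬ (0:ℤ) ≤ -1 by norm_num)]
            rfl
          · rw [dif_neg (show ¬ (0:ℤ) ≤ p + 1 by omega),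
              dif_neg (show ¬ (0:ℤ) ≤ p by omega)]
            exact down_compat φ p ((-p).toNat) ((-(p+1)).toNat) (by omega) _ _ g
      refine ⟨⟨s, hsmem⟩, ?_⟩
      show s 0 = g
      simp only [hsdef]
      rw [dif_pos (le_refl (0:ℤ))]
      rfl
  · -- injectivity into the direct limit
    rintro x hx y hy ⟨m, hm⟩
    have hxy : x * y⁻¹ ∈ F φ n := mul_mem hx (inv_mem hy)
    have hmem : castHom (show (0:ℤ) = -(m:ℤ) + (m:ℤ) by omega) (x * y⁻¹)
        ∈ Hgrp φ (-(m:ℤ) + (m:ℤ)) n :=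
      cast_mem_Hgrp φ _ hxy
    have hch : chain φ (-(m:ℤ)) m
        (castHom (show (0:ℤ) = -(m:ℤ) + (m:ℤ) by omega) (x * y⁻¹)) = 1 := by
      have hdm : down φ m (x * y⁻¹) = 1 := by
        rw [map_mul, map_inv, hm, mul_inv_cancel]
      exact hdm
    have h1 := keyb φ hrigid n hstab' hfg hrf' (-(m:ℤ)) m _ hmem hch
    have h2 := (castHom_eq_one _).mp h1
    exact mul_inv_eq_one.mp h2
  · -- surjectivity onto the direct limit
    intro m x
    refine ⟨m + n, by omega, ?_⟩
    have hXmem : transDown φ m (m+n) (by omega) x ∈ Hgrp φ (-((m+n:ℕ):ℤ)) n := by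
      rw [← hgrp_natCast φ (show (m+n) - m = n by omega)]
      exact ⟨castHom (by omega) x, rfl⟩
    have himg : ∀ X ∈ Hgrp φ (-((m+n:ℕ):ℤ)) n,
        ∃ y ∈ F φ n, down φ (m+n) y = X := by
      intro X hX
      rw [← hgrp_ge φ hrigid n hstab' ((m+n) + n) (-((m+n:ℕ):ℤ)) (by omega),
        hgrp_split φ (m+n) n] at hX
      obtain ⟨w, hw, hw2⟩ := Subgroup.mem_map.mp hX
      refine ⟨castHom (show -((m+n:ℕ):ℤ) + ((m+n:ℕ):ℤ) = 0 by omega) w,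
        cast_mem_Hgrp φ _ hw, ?_⟩
      show chain φ (-((m+n:ℕ):ℤ)) (m+n) (castHom _ (castHom _ w)) = X
      rw [castHom_castHom, castHom_id]
      exact hw2
    obtain ⟨y, hy, hy2⟩ := himg _ hXmem
    exact ⟨y, hy, hy2.symm⟩
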